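/- arXiv:0810.4740 — 3 statements merged into one kernel-verified Lean document; each statement's English description precedes it below -/
import Mathlib

section
/- Let d ≡ 5 (mod 8) be a square-free positive integer and let w = x + y√d with x, y ∈ ℤ be a unit of O_K = ℤ[(1+√d)/2] with norm x² - y²d = -1. Then the 2-adic valuation of w² - 1 in O_K is exactly 2 (i.e. w² ≡ 1 mod 4 but w² ≢ 1 mod 8, where 2 is inert in K). -/
open NumberField

/-- Let `d ≡ 5 (mod 8)` be a square-free positive integer and let `w = x + y√d`
(`x, y ∈ ℤ`) be a unit of the ring of integers of `K = ℚ(√d)` of norm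
`x² - y²d = -1`.  Then the `2`-adic valuation of `w² - 1` in `𝓞 K` is exactly `2`,
i.e. `4 ∣ w² - 1` but `8 ∤ w² - 1` (where `2` is inert in `K`). -/
theorem stmt3 (d : ℕ) (hd1 : 1 < d) (hd : Squarefree d) (hd8 : d % 8 = 5)
    (K : Type*) [Field K] [NumberField K] (α : K) (hα : α ^ 2 = (d : K))
    (hrank : Module.finrank ℚ K = 2)
    (h2 : Prime (2 : 𝓞 K))
    (x y : ℤ) (w : (𝓞 K)ˣ) (hw : (w : K) = (x : K) + (y : K) * α)
    (hnorm : x ^ 2 - y ^ 2 * (d : ℤ) = -1) :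
    (4 : 𝓞 K) ∣ ((w : 𝓞 K) ^ 2 - 1) ∧ ¬ (8 : 𝓞 K) ∣ ((w : 𝓞 K) ^ 2 - 1) := by
  -- mod 8 analysis: x ≡ 2 mod 4
  have h8 : ((x : ZMod 8)) ^ 2 - ((y : ZMod 8)) ^ 2 * 5 = -1 := by
    have := congrArg (fun t : ℤ => (t : ZMod 8)) hnorm
    push_cast at this
    have hd5 : ((d : ℕ) : ZMod 8) = 5 := by
      rw [← ZMod.natCast_mod, hd8]; norm_num
    rw [hd5] at this
    exact this
  have hcase : ∀ a b : ZMod 8, a ^ 2 - b ^ 2 * 5 = -1 → a = 2 ∨ a = 6 := by decide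
  have hx8 : x % 8 = 2 ∨ x % 8 = 6 := by
    rcases hcase _ _ h8 with h | h
    · left
      have : (x : ZMod 8) = ((2 : ℤ) : ZMod 8) := by rw [h]; norm_num
      rw [ZMod.intCast_eq_intCast_iff'] at this
      simpa using this
    · right
      have : (x : ZMod 8) = ((6 : ℤ) : ZMod 8) := by rw [h]; norm_num
      rw [ZMod.intCast_eq_intCast_iff'] at this
      simpa using this
  obtain ⟨u, hu1, hu2⟩ : ∃ u : ℤ, x = 2 * u ∧ u % 2 = 1 := ⟨x / 2, by omega⟩
  -- the key identity in K
  have hnK : (x : K) ^ 2 - (y : K) ^ 2 * (d : K) = -1 := by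
    have := congrArg (fun t : ℤ => (t : K)) hnorm
    push_cast at this
    exact this
  have hxK : (x : K) = 2 * (u : K) := by push_cast [hu1]; ring
  have keyK : (w : K) ^ 2 - 1 = 4 * ((u : K) * (w : K)) := by
    rw [hw]
    linear_combination (y : K) ^ 2 * hα - hnK + (2 * ((x : K) + (y : K) * α)) * hxK
  have key : (w : 𝓞 K) ^ 2 - 1 = 4 * ((u : 𝓞 K) * (w : 𝓞 K)) := by
    apply RingOfIntegers.coe_injective
    push_cast
    exact keyK
  constructor
  · exact ⟨(u : 𝓞 K) * (w : 𝓞 K), key⟩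
  · rintro ⟨c, hc⟩
    rw [key] at hc
    have h4 : (4 : 𝓞 K) ≠ 0 := by
      have : (4 : 𝓞 K) = ((4 : ℤ) : 𝓞 K) := by push_cast; ring
      rw [this]
      simp only [ne_eq, Int.cast_eq_zero]
      norm_num
    have huw : (u : 𝓞 K) * (w : 𝓞 K) = 2 * c := by
      apply mul_left_cancel₀ h4
      rw [hc]; ring
    have hu_dvd : (2 : 𝓞 K) ∣ (u : 𝓞 K) := by
      refine ⟨c * (↑w⁻¹ : 𝓞 K), ?_⟩
      have hwinv : (w : 𝓞 K) * (↑w⁻¹ : 𝓞 K) = 1 := by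
        exact_mod_cast w.mul_inv
      calc (u : 𝓞 K) = (u : 𝓞 K) * ((w : 𝓞 K) * (↑w⁻¹ : 𝓞 K)) := by rw [hwinv]; ring
        _ = ((u : 𝓞 K) * (w : 𝓞 K)) * (↑w⁻¹ : 𝓞 K) := by ring
        _ = 2 * (c * (↑w⁻¹ : 𝓞 K)) := by rw [huw]; ring
    have hone : (2 : 𝓞 K) ∣ 1 := by
      obtain ⟨v, hv⟩ : ∃ v : ℤ, u = 2 * v + 1 := ⟨u / 2, by omega⟩
      have : (u : 𝓞 K) = 2 * (v : 𝓞 K) + 1 := by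
        rw [hv]; push_cast; ring
      have h2v : (2 : 𝓞 K) ∣ 2 * (v : 𝓞 K) := ⟨(v : 𝓞 K), rfl⟩
      have hsub := dvd_sub hu_dvd h2v
      rw [this] at hsub
      simpa using hsub
    exact h2.not_unit (isUnit_of_dvd_one hone)
end

section
/- Let p be an odd prime, K = Q(ζ_p), p = (1 - ζ_p) the prime above p, and O* the unit group of O_K. For k = 1 and k = 2, the natural map O* → (O_K/p^k)* is surjective. -/
/-!
Every element of `𝓞 K = ℤ[ζ]` is congruent to a rational integer modulo `ζ - 1`, and for `p ∤ m`
the cyclotomic unit `1 + ζ + ⋯ + ζ ^ (m - 1) = (ζ ^ m - 1) / (ζ - 1)` is congruent to `m`; this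
gives surjectivity modulo `𝔭`. Modulo `𝔭²`, after dividing by such a unit it remains to reach the
classes `1 + (ζ - 1) y`, and these are hit by the powers `ζ ^ j ≡ 1 + j (ζ - 1)` with `j ≡ y`
modulo `𝔭`.
-/

open NumberField Polynomial Finset

section CommRing

variable {R : Type*} [CommRing R]

theorem sub_one_dvd_geom_sum_sub_natCast (ζ : R) (j : ℕ) :
    ζ - 1 ∣ ∑ i ∈ range j, ζ ^ i - j := by
  have hsum : ∑ i ∈ range j, ζ ^ i - j = ∑ i ∈ range j, (ζ ^ i - 1) := by
    simp [sum_sub_distrib]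
  rw [hsum]
  exact dvd_sum fun i _ ↦ by simpa using sub_dvd_pow_sub_pow ζ 1 i

theorem sub_one_sq_dvd_pow_sub_one_sub_mul (ζ : R) (j : ℕ) :
    (ζ - 1) ^ 2 ∣ ζ ^ j - 1 - j * (ζ - 1) := by
  have hfac : ζ ^ j - 1 - j * (ζ - 1) = (ζ - 1) * (∑ i ∈ range j, ζ ^ i - j) := by
    linear_combination (mul_geom_sum ζ j).symm
  rw [hfac, sq]
  exact mul_dvd_mul_left _ (sub_one_dvd_geom_sum_sub_natCast ζ j)

theorem sub_one_sq_dvd_one_add_mul_sub_pow {ζ y : R} {j : ℕ} (hj : ζ - 1 ∣ y - j) :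
    (ζ - 1) ^ 2 ∣ 1 + (ζ - 1) * y - ζ ^ j := by
  have hsplit :
      1 + (ζ - 1) * y - ζ ^ j = (ζ - 1) * (y - j) - (ζ ^ j - 1 - j * (ζ - 1)) := by
    ring
  rw [hsplit]
  exact dvd_sub (sq (ζ - 1) ▸ mul_dvd_mul_left _ hj) (sub_one_sq_dvd_pow_sub_one_sub_mul ζ j)

theorem exists_intCast_sub_dvd_of_adjoin_eq_top {ζ : R} (h : Algebra.adjoin ℤ {ζ} = ⊤) (x : R) :
    ∃ n : ℤ, ζ - 1 ∣ x - n := by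
  obtain ⟨f, rfl⟩ : x ∈ (aeval ζ : ℤ[X] →ₐ[ℤ] R).range := by
    rw [← Algebra.adjoin_singleton_eq_range_aeval, h]
    trivial
  refine ⟨f.eval 1, ?_⟩
  simpa [aeval_def, eval₂_eq_eval_map, eval_one_map] using
    sub_dvd_eval_sub ζ 1 (f.map (Int.castRingHom R))

theorem Ideal.Quotient.surjective_units_map_mk_span_pow {π : R} (hπ : ¬IsUnit π) {k : ℕ}
    (hk : k ≠ 0) (h : ∀ x, ¬π ∣ x → ∃ u : Rˣ, π ^ k ∣ u - x) :
    Function.Surjective (Units.map (Ideal.Quotient.mk (Ideal.span {π} ^ k)).toMonoidHom) := by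
  intro c
  obtain ⟨x, hx⟩ := Ideal.Quotient.mk_surjective (c : R ⧸ Ideal.span {π} ^ k)
  have hxπ : ¬π ∣ x := by
    obtain ⟨z, hz⟩ := Ideal.Quotient.mk_surjective (↑c⁻¹ : R ⧸ Ideal.span {π} ^ k)
    have hxz : π ^ k ∣ x * z - 1 := by
      rw [← Ideal.mem_span_singleton, ← Ideal.span_singleton_pow,
        ← Ideal.Quotient.eq_zero_iff_mem]
      simp [hx, hz]
    intro hdvd
    refine hπ (isUnit_of_dvd_one ?_)
    simpa using dvd_sub (hdvd.mul_right z) ((dvd_pow_self π hk).trans hxz)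
  obtain ⟨u, hu⟩ := h x hxπ
  refine ⟨u, Units.ext ?_⟩
  simp only [Units.coe_map, RingHom.toMonoidHom_eq_coe, MonoidHom.coe_coe, ← hx]
  exact Ideal.Quotient.eq.2 (by rwa [Ideal.span_singleton_pow, Ideal.mem_span_singleton])

end CommRing

namespace IsPrimitiveRoot

section IsDomain

variable {A : Type*} [CommRing A] [IsDomain A] {ζ : A} {n : ℕ}

theorem sub_one_dvd_intCast_sub_val (hζ : IsPrimitiveRoot ζ n) (hn : 1 < n) (k : ℤ) :
    ζ - 1 ∣ (k : A) - ((k : ZMod n).val : A) := by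
  have : NeZero n := ⟨by omega⟩
  have hdvd : (n : ℤ) ∣ k - (k : ZMod n).val := by
    rw [← ZMod.intCast_zmod_eq_zero_iff_dvd]
    simp
  refine (hζ.sub_one_dvd_natCast hn).trans ?_
  simpa using map_dvd (Int.castRingHom A) hdvd

theorem exists_unit_sub_intCast_dvd (hζ : IsPrimitiveRoot ζ n) (hn : 2 ≤ n) {k : ℤ}
    (hk : IsUnit (k : ZMod n)) : ∃ u : Aˣ, ζ - 1 ∣ u - k := by
  have : NeZero n := ⟨by omega⟩
  set m := (k : ZMod n).val
  have hm : m.Coprime n := (ZMod.isUnit_iff_coprime m n).1 (by rwa [ZMod.natCast_zmod_val])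
  refine ⟨(hζ.geom_sum_isUnit hn hm).unit, ?_⟩
  have hsplit : ((hζ.geom_sum_isUnit hn hm).unit : A) - k =
      (∑ i ∈ range m, ζ ^ i - m) - (k - m) := by
    rw [IsUnit.unit_spec]
    ring
  rw [hsplit]
  exact dvd_sub (sub_one_dvd_geom_sum_sub_natCast ζ m) (hζ.sub_one_dvd_intCast_sub_val hn k)

end IsDomain

variable {p : ℕ} [hp : Fact p.Prime] {K : Type*} [Field K] [NumberField K]
  [IsCyclotomicExtension {p} ℚ K] {ζ : 𝓞 K}

theorem sub_one_dvd_intCast_iff (hζ : IsPrimitiveRoot ζ p) {n : ℤ} :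
    ζ - 1 ∣ (n : 𝓞 K) ↔ (p : ℤ) ∣ n :=
  IsCyclotomicExtension.Rat.zeta_sub_one_dvd_intCast_iff' p
    (hζ.map_of_injective RingOfIntegers.coe_injective)

theorem not_isUnit_sub_one (hζ : IsPrimitiveRoot ζ p) : ¬IsUnit (ζ - 1) := by
  intro h
  have h1 : ζ - 1 ∣ ((1 : ℤ) : 𝓞 K) := by simpa using h.dvd
  exact hp.out.not_dvd_one (by exact_mod_cast hζ.sub_one_dvd_intCast_iff.1 h1)

theorem exists_intCast_sub_dvd (hζ : IsPrimitiveRoot ζ p) (x : 𝓞 K) :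
    ∃ n : ℤ, ζ - 1 ∣ x - n :=
  exists_intCast_sub_dvd_of_adjoin_eq_top (IsCyclotomicExtension.Rat.adjoin_singleton_eq_top
    (hζ.map_of_injective RingOfIntegers.coe_injective)) x

theorem exists_unit_sub_dvd (hζ : IsPrimitiveRoot ζ p) {x : 𝓞 K} (hx : ¬ζ - 1 ∣ x) :
    ∃ u : (𝓞 K)ˣ, ζ - 1 ∣ u - x := by
  obtain ⟨n, hn⟩ := hζ.exists_intCast_sub_dvd x
  have hpn : ¬(p : ℤ) ∣ n := fun h ↦
    hx (by simpa using dvd_add hn (hζ.sub_one_dvd_intCast_iff.2 h))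
  have hn_unit : IsUnit (n : ZMod p) :=
    isUnit_iff_ne_zero.2 (by rwa [Ne, ZMod.intCast_zmod_eq_zero_iff_dvd])
  obtain ⟨u, hu⟩ := hζ.exists_unit_sub_intCast_dvd hp.out.two_le hn_unit
  exact ⟨u, sub_sub_sub_cancel_right (u : 𝓞 K) x n ▸ dvd_sub hu hn⟩

theorem exists_unit_sub_sq_dvd (hζ : IsPrimitiveRoot ζ p) {x : 𝓞 K} (hx : ¬ζ - 1 ∣ x) :
    ∃ u : (𝓞 K)ˣ, (ζ - 1) ^ 2 ∣ u - x := by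
  obtain ⟨u, hu⟩ := hζ.exists_unit_sub_dvd hx
  obtain ⟨y, hy⟩ : ζ - 1 ∣ x * ↑u⁻¹ - 1 := by
    have := hu.mul_right (↑u⁻¹ : 𝓞 K)
    rwa [sub_mul, Units.mul_inv, ← dvd_neg, neg_sub] at this
  obtain ⟨n, hn⟩ := hζ.exists_intCast_sub_dvd y
  set j := (n : ZMod p).val
  have hj : ζ - 1 ∣ y - j :=
    sub_add_sub_cancel y (n : 𝓞 K) j ▸ dvd_add hn (hζ.sub_one_dvd_intCast_sub_val hp.out.one_lt n)
  obtain ⟨v, hv⟩ := hζ.isUnit hp.out.ne_zero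
  refine ⟨u * v ^ j, ?_⟩
  have hfac : ((u * v ^ j : (𝓞 K)ˣ) : 𝓞 K) - x = -u * (1 + (ζ - 1) * y - ζ ^ j) := by
    rw [← hy, Units.val_mul, Units.val_pow_eq_pow_val, hv]
    linear_combination x * Units.mul_inv u
  rw [hfac]
  exact (sub_one_sq_dvd_one_add_mul_sub_pow hj).mul_left _

end IsPrimitiveRoot

theorem stmt4_general (p : ℕ+) (hp : (p : ℕ).Prime)
    (K : Type*) [Field K] [NumberField K] [IsCyclotomicExtension {(p : ℕ)} ℚ K]
    (ζ : 𝓞 K) (hζ : IsPrimitiveRoot ζ p) :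
    (Function.Surjective
      (Units.map (Ideal.Quotient.mk ((Ideal.span {1 - ζ}) ^ 1)).toMonoidHom)) ∧
    (Function.Surjective
      (Units.map (Ideal.Quotient.mk ((Ideal.span {1 - ζ}) ^ 2)).toMonoidHom)) := by
  have : Fact (p : ℕ).Prime := ⟨hp⟩
  rw [← neg_sub, Ideal.span_singleton_neg]
  have hπ := hζ.not_isUnit_sub_one
  refine ⟨Ideal.Quotient.surjective_units_map_mk_span_pow hπ one_ne_zero fun x hx ↦ ?_,
    Ideal.Quotient.surjective_units_map_mk_span_pow hπ two_ne_zero fun x hx ↦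
      hζ.exists_unit_sub_sq_dvd hx⟩
  simpa using hζ.exists_unit_sub_dvd hx

/-- Let `p` be an odd prime, `K = ℚ(ζ_p)`, `𝔭 = (1 - ζ_p)` the prime above `p`.
For `k = 1` and `k = 2`, the natural map `(𝓞 K)ˣ → ((𝓞 K)/𝔭^k)ˣ` is surjective. -/
theorem stmt4 (p : ℕ+) (hp : (p : ℕ).Prime) (hodd : (p : ℕ) ≠ 2)
    (K : Type*) [Field K] [NumberField K] [IsCyclotomicExtension {(p : ℕ)} ℚ K]
    (ζ : 𝓞 K) (hζ : IsPrimitiveRoot ζ p) :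
    (Function.Surjective
      (Units.map (Ideal.Quotient.mk ((Ideal.span {1 - ζ}) ^ 1)).toMonoidHom)) ∧
    (Function.Surjective
      (Units.map (Ideal.Quotient.mk ((Ideal.span {1 - ζ}) ^ 2)).toMonoidHom)) :=
  stmt4_general p hp K ζ hζ
end

section
/- Let p be an odd prime, K = Q(ζ_p), p = (1-ζ_p), and let x be a unit of ℤ[ζ_p] with x ≡ 1 (mod p²). Then x lies in the maximal real subfield Q(ζ_p + ζ_p^{-1}). Consequently ν_p(x - 1) is even, so units congruent to 1 mod p^k for odd k ≥ 3 are automatically congruent to 1 mod p^{k+1}. -/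
/-!
Write `π = 1 - ζ`; `σ` is complex conjugation under every embedding `K → ℂ`. For a unit `x`,
all conjugates of `x / σ x` have absolute value `1`, so it is a root of unity `±ζ ^ r` (as `p`
is odd). If `x ≡ 1 mod π²` then also `σ x ≡ 1`, hence `±ζ ^ r ≡ 1 mod π²`; since
`-ζ ^ r ≡ -1` and `ζ ^ r - 1` is an associate of `π` unless `ζ ^ r = 1`, this forces `x = σ x`.

For the parity statement write `x - 1 = π ^ k z`. Since `σ π = -ζ⁻¹ π` and `σ` acts trivially
on `𝓞 K / π = ℤ[ζ] / (1 - ζ)`, applying `σ` gives `z ≡ (-1) ^ k z = -z mod π` for odd `k`,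
so `π ∣ 2 z`, and `π ∤ 2` because `p` is odd.
-/

open NumberField NumberField.ComplexEmbedding

section PrincipalPrime

variable {R : Type*} [CommRing R] {π : R}

theorem pow_dvd_apply_of_dvd_apply (τ : R →+* R) (hτ : π ∣ τ π) {k : ℕ} {y : R}
    (hy : π ^ k ∣ y) : π ^ k ∣ τ y := by
  obtain ⟨c, rfl⟩ := hy
  rw [map_mul, map_pow]
  exact dvd_mul_of_dvd_left (pow_dvd_pow_of_dvd hτ k) _

theorem dvd_apply_sub_self_of_adjoin_eq_top {s : Set R} (hs : Algebra.adjoin ℤ s = ⊤)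
    (τ : R →+* R) (h : ∀ a ∈ s, π ∣ τ a - a) (y : R) : π ∣ τ y - y := by
  let mk := Ideal.Quotient.mk (Ideal.span {π})
  have hext : (mk.comp τ).toIntAlgHom = mk.toIntAlgHom :=
    AlgHom.ext_of_adjoin_eq_top hs fun a ha ↦
      Ideal.Quotient.eq.2 (Ideal.mem_span_singleton.2 (h a ha))
  exact Ideal.mem_span_singleton.1 (Ideal.Quotient.eq.1 (AlgHom.congr_fun hext y))

variable [IsDomain R]

theorem pow_succ_dvd_of_odd_of_apply_eq_self (hπ : Prime π) (h2 : ¬π ∣ 2) (τ : R →+* R)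
    {v : R} (hτπ : τ π = v * π) (hv : π ∣ v + 1) (hτ : ∀ z, π ∣ τ z - z) {k : ℕ} (hk : Odd k)
    {y : R} (hy : τ y = y) (hdvd : π ^ k ∣ y) : π ^ (k + 1) ∣ y := by
  obtain ⟨z, rfl⟩ := hdvd
  have hz : z = v ^ k * τ z := by
    refine mul_left_cancel₀ (pow_ne_zero k hπ.ne_zero) ?_
    conv_lhs => rw [← hy]
    rw [map_mul, map_pow, hτπ]
    ring
  have hvk : π ∣ v ^ k + 1 := by
    simpa using hv.trans (hk.add_dvd_pow_add_pow v 1)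
  have h2z : π ∣ 2 * z := by
    have : 2 * z = (v ^ k + 1) * τ z - (τ z - z) := by linear_combination hz
    rw [this]
    exact dvd_sub (dvd_mul_of_dvd_left hvk _) (hτ z)
  rw [pow_succ]
  exact mul_dvd_mul_left _ ((hπ.dvd_or_dvd h2z).resolve_left h2)

end PrincipalPrime

section RootOfUnity

variable {R : Type*} [CommRing R] {ζ : R}

theorem one_sub_dvd_pow_sub_one (ζ : R) (r : ℕ) : 1 - ζ ∣ ζ ^ r - 1 := by
  rw [← neg_sub 1 (ζ ^ r), dvd_neg]
  simpa using sub_dvd_pow_sub_pow 1 ζ r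

theorem one_sub_dvd_apply_sub_self_of_mul_eq_one (τ : R →+* R) (hτζ : τ ζ * ζ = 1) :
    1 - ζ ∣ τ ζ - ζ :=
  ⟨τ ζ + 1, by linear_combination hτζ⟩

theorem apply_one_sub_of_mul_eq_one (τ : R →+* R) (hτζ : τ ζ * ζ = 1) :
    τ (1 - ζ) = -τ ζ * (1 - ζ) := by
  rw [map_sub, map_one]
  linear_combination -hτζ

theorem one_sub_dvd_neg_apply_add_one_of_mul_eq_one (τ : R →+* R) (hτζ : τ ζ * ζ = 1) :
    1 - ζ ∣ -τ ζ + 1 :=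
  ⟨-τ ζ, by linear_combination -hτζ⟩

theorem IsPrimitiveRoot.eq_one_of_sq_dvd_sub_one [IsDomain R] {p : ℕ} (hp : p.Prime)
    (hζ : IsPrimitiveRoot ζ p) (hπ : Prime (1 - ζ)) (h2 : ¬1 - ζ ∣ 2) {η : R} {r : ℕ}
    (hη : η = ζ ^ r ∨ η = -ζ ^ r) (h : (1 - ζ) ^ 2 ∣ η - 1) : η = 1 := by
  rcases hη with rfl | rfl
  · by_contra hne
    have hcop : r.Coprime p := Nat.coprime_comm.1 <|
      hp.coprime_iff_not_dvd.2 fun hdvd ↦ hne ((hζ.pow_eq_one_iff_dvd r).2 hdvd)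
    have hsq : (1 - ζ) ^ 2 ∣ (1 - ζ) ^ 1 := by
      rw [pow_one, ← dvd_neg, neg_sub]
      exact h.trans (hζ.associated_sub_one_pow_sub_one_of_coprime hcop).symm.dvd
    exact absurd ((pow_dvd_pow_iff hπ.ne_zero hπ.not_isUnit).1 hsq) (by norm_num)
  · -- `-ζ ^ r - 1 ≡ -2 mod (1 - ζ)`
    exact absurd ((dvd_pow_self _ two_ne_zero).trans h) fun h' ↦ h2 <| by
      simpa [one_add_one_eq_two] using dvd_neg.2 (dvd_add h' (one_sub_dvd_pow_sub_one ζ r))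

end RootOfUnity

section UnitsModConjugation

variable {K : Type*} [Field K]

theorem IsPrimitiveRoot.isConj_of_apply_eq_inv [CharZero K] {n : ℕ} [NeZero n]
    [IsCyclotomicExtension {n} ℚ K] {ζ : K} (hζ : IsPrimitiveRoot ζ n) {σ : K ≃ₐ[ℚ] K}
    (hσ : σ ζ = ζ⁻¹) (φ : K →+* ℂ) : IsConj φ σ := by
  have hφζ : ‖φ ζ‖ = 1 := (hζ.map_of_injective φ.injective).norm'_eq_one (NeZero.ne n)
  have hext : (conjugate φ).toRatAlgHom = (φ.comp (σ : K →+* K)).toRatAlgHom :=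
    AlgHom.ext_of_adjoin_eq_top (IsCyclotomicExtension.adjoin_primitive_root_eq_top hζ)
      fun a ha ↦ by
        rw [Set.mem_singleton_iff.1 ha]
        simp [hσ, Complex.inv_eq_conj hφζ]
  exact RingHom.ext (AlgHom.congr_fun hext)

variable [NumberField K]

theorem isOfFinOrder_div_apply_of_isConj {σ : K ≃ₐ[ℚ] K} (hσ : ∀ φ : K →+* ℂ, IsConj φ σ)
    (u : (𝓞 K)ˣ) : IsOfFinOrder ((u : K) / σ u) := by
  have hint : IsIntegral ℤ ((u : K) / σ u) := by
    have : (u : K) / σ u = u * σ ((u⁻¹ : (𝓞 K)ˣ) : K) := by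
      simp [div_eq_mul_inv, map_inv₀]
    rw [this]
    exact u.val.isIntegral_coe.mul ((u⁻¹).val.isIntegral_coe.map σ)
  obtain ⟨n, hn, hpow⟩ := Embeddings.pow_eq_one_of_norm_eq_one K ℂ hint fun φ ↦ by
    rw [map_div₀, (hσ φ).eq, norm_div, RCLike.star_def, Complex.norm_conj, div_self (by simp)]
  exact isOfFinOrder_iff_pow_eq_one.2 ⟨n, hn, hpow⟩

theorem RingOfIntegers.mapRingEquiv_mul_self_of_apply_eq_inv {ζ : 𝓞 K} (hζ : ζ ≠ 0)
    {σ : K ≃ₐ[ℚ] K} (hσ : σ ζ = (ζ : K)⁻¹) :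
    RingOfIntegers.mapRingEquiv (σ : K ≃+* K) ζ * ζ = 1 :=
  RingOfIntegers.ext (by simp [RingOfIntegers.mapRingEquiv_apply, hσ, hζ])

namespace IsPrimitiveRoot

variable {p : ℕ} [Fact p.Prime] [IsCyclotomicExtension {p} ℚ K] {ζ : 𝓞 K}

theorem prime_one_sub (hζ : IsPrimitiveRoot ζ p) : Prime (1 - ζ) := by
  have hζK : IsPrimitiveRoot (ζ : K) p := hζ.map_of_injective RingOfIntegers.coe_injective
  simpa using hζK.zeta_sub_one_prime'.neg

theorem one_sub_not_dvd_two (hζ : IsPrimitiveRoot ζ p) (hodd : p ≠ 2) : ¬1 - ζ ∣ 2 := by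
  have hζK : IsPrimitiveRoot (ζ : K) p := hζ.map_of_injective RingOfIntegers.coe_injective
  have h := IsCyclotomicExtension.Rat.two_not_mem_span_zeta_sub_one' p hζK
    (lt_of_le_of_ne (Fact.out : p.Prime).two_le (Ne.symm hodd))
  rwa [Ideal.mem_span_singleton, ← neg_dvd, neg_sub] at h

theorem apply_eq_self_of_sq_dvd_sub_one (hζ : IsPrimitiveRoot ζ p) (hodd : p ≠ 2)
    {σ : K ≃ₐ[ℚ] K} (hσ : σ ζ = (ζ : K)⁻¹) (u : (𝓞 K)ˣ) (hu : (1 - ζ) ^ 2 ∣ (u : 𝓞 K) - 1) :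
    σ u = u := by
  have hζK : IsPrimitiveRoot (ζ : K) p := hζ.map_of_injective RingOfIntegers.coe_injective
  let τ := RingOfIntegers.mapRingEquiv (σ : K ≃+* K)
  have hτζ : τ ζ * ζ = 1 :=
    RingOfIntegers.mapRingEquiv_mul_self_of_apply_eq_inv (hζ.ne_zero (NeZero.ne p)) hσ
  obtain ⟨r, -, hr⟩ := hζK.exists_pow_or_neg_mul_pow_of_isOfFinOrder
    ((Fact.out : p.Prime).odd_of_ne_two hodd)
    (isOfFinOrder_div_apply_of_isConj (hζK.isConj_of_apply_eq_inv hσ) u)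
  obtain ⟨η, hη, hηK⟩ : ∃ η : 𝓞 K, (η = ζ ^ r ∨ η = -ζ ^ r) ∧ (u : K) = η * σ u := by
    have hσu : σ u ≠ 0 := by simp
    rcases hr with hr | hr
    · exact ⟨ζ ^ r, .inl rfl, by push_cast; rw [← hr, div_mul_cancel₀ _ hσu]⟩
    · exact ⟨-ζ ^ r, .inr rfl, by push_cast; rw [← hr, div_mul_cancel₀ _ hσu]⟩
  have hστ : (u : 𝓞 K) = η * τ u := RingOfIntegers.ext (by simpa [τ] using hηK)
  have hsq : (1 - ζ) ^ 2 ∣ (η - 1) * τ u := by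
    have : (η - 1) * τ u = ((u : 𝓞 K) - 1) - τ ((u : 𝓞 K) - 1) := by
      rw [map_sub, map_one]
      linear_combination -hστ
    rw [this]
    exact dvd_sub hu (pow_dvd_apply_of_dvd_apply (τ : 𝓞 K →+* 𝓞 K)
      (Dvd.intro_left _ (apply_one_sub_of_mul_eq_one _ hτζ).symm) hu)
  have hη1 := hζ.eq_one_of_sq_dvd_sub_one Fact.out hζ.prime_one_sub (hζ.one_sub_not_dvd_two hodd)
    hη (((u.isUnit.map τ).dvd_mul_right).1 hsq)
  simpa [hη1] using hηK.symm

end IsPrimitiveRoot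

end UnitsModConjugation

/-- Let `p` be an odd prime, `K = ℚ(ζ_p)`, `𝔭 = (1 - ζ_p)`, and let `x` be a unit of
`ℤ[ζ_p]` with `x ≡ 1 (mod 𝔭²)`.  Then `x` lies in the maximal real subfield
`ℚ(ζ_p + ζ_p⁻¹)`, i.e. it is fixed by complex conjugation (the automorphism `σ`
sending `ζ_p` to `ζ_p⁻¹`).  Consequently the `𝔭`-adic valuation of `x - 1` is even,
so units congruent to `1 mod 𝔭^k` for odd `k ≥ 3` are automatically congruent to
`1 mod 𝔭^(k+1)`. -/
theorem stmt6 (p : ℕ+) (hp : (p : ℕ).Prime) (hodd : (p : ℕ) ≠ 2)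
    (K : Type*) [Field K] [NumberField K] [IsCyclotomicExtension {(p : ℕ)} ℚ K]
    (ζ : 𝓞 K) (hζ : IsPrimitiveRoot ζ p)
    (σ : K ≃ₐ[ℚ] K) (hσ : σ (ζ : K) = (ζ : K)⁻¹)
    (x : (𝓞 K)ˣ) (hx : (x : 𝓞 K) - 1 ∈ (Ideal.span {1 - ζ}) ^ 2) :
    σ ((x : 𝓞 K) : K) = ((x : 𝓞 K) : K) ∧
    ∀ k : ℕ, 3 ≤ k → Odd k →
      (x : 𝓞 K) - 1 ∈ (Ideal.span {1 - ζ}) ^ k →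
      (x : 𝓞 K) - 1 ∈ (Ideal.span {1 - ζ}) ^ (k + 1) := by
  have := Fact.mk hp
  simp only [Ideal.span_singleton_pow, Ideal.mem_span_singleton] at hx ⊢
  have hfix := hζ.apply_eq_self_of_sq_dvd_sub_one hodd hσ x hx
  refine ⟨hfix, fun k _ hk hxk ↦ ?_⟩
  let τ : 𝓞 K →+* 𝓞 K := RingOfIntegers.mapRingEquiv (σ : K ≃+* K)
  have hτζ : τ ζ * ζ = 1 :=
    RingOfIntegers.mapRingEquiv_mul_self_of_apply_eq_inv (hζ.ne_zero (NeZero.ne _)) hσ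
  have hτ : ∀ z, 1 - ζ ∣ τ z - z :=
    dvd_apply_sub_self_of_adjoin_eq_top (IsCyclotomicExtension.adjoin_primitive_root_eq_top hζ) τ
      (by simpa using one_sub_dvd_apply_sub_self_of_mul_eq_one τ hτζ)
  have hτx : τ ((x : 𝓞 K) - 1) = (x : 𝓞 K) - 1 := by
    rw [map_sub, map_one]
    exact congrArg (· - 1) (RingOfIntegers.ext hfix)
  exact pow_succ_dvd_of_odd_of_apply_eq_self hζ.prime_one_sub (hζ.one_sub_not_dvd_two hodd) τ
    (apply_one_sub_of_mul_eq_one τ hτζ) (one_sub_dvd_neg_apply_add_one_of_mul_eq_one τ hτζ) hτ hk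
    hτx hxk
end
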